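/- arXiv:2102.11782 — 2 statements merged into one kernel-verified Lean document; each statement's English description precedes it below -/
import Mathlib

section
/- Let Δ be a set of terms over V and let l_1, …, l_k be literals. For each i = 1, …, k, let L_i be the set of terms t ∈ Δ such that l_i ∈ t and t contains the complementary literal of no l_j (j = 1, …, k), where the complementary literal of a positive literal x is ¬x and of ¬x is x. Then there exists a consistent subset Φ ⊆ Δ with Φ ⊨ l_i for every i if and only if there exists a choice of terms t_1 ∈ L_1, …, t_k ∈ L_k such that every pair {t_i, t_j} (1 ≤ i, j ≤ k) is consistent. -/
/-- A literal over `V`: `Sum.inl x` is the positive literal `x`,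
`Sum.inr x` is the negative literal `¬x`. -/
abbrev Lit (V : Type) := V ⊕ V

/-- A term is a finite set of literals. -/
abbrev Term (V : Type) := Finset (Lit V)

/-- An assignment satisfies a literal. -/
def satLit {V : Type} (σ : V → Bool) : Lit V → Prop
  | Sum.inl x => σ x = true
  | Sum.inr x => σ x = false

/-- An assignment satisfies a term if it satisfies every literal in it. -/
def satTerm {V : Type} (σ : V → Bool) (t : Term V) : Prop := ∀ l ∈ t, satLit σ l

/-- A set of terms is consistent if some assignment satisfies all of its members. -/
def ConsistentT {V : Type} (Φ : Set (Term V)) : Prop := ∃ σ, ∀ t ∈ Φ, satTerm σ t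

/-- `Φ ⊨ l`: every assignment satisfying all terms of `Φ` satisfies `l`. -/
def EntailsLit {V : Type} (Φ : Set (Term V)) (l : Lit V) : Prop :=
  ∀ σ, (∀ t ∈ Φ, satTerm σ t) → satLit σ l

/-- The complementary literal. -/
def complLit {V : Type} : Lit V → Lit V
  | Sum.inl x => Sum.inr x
  | Sum.inr x => Sum.inl x

/-!
If a satisfiable set of terms `Φ` entails `l`, then some term of `Φ` contains `l`: otherwise
flip a satisfying assignment `σ` at the variable of `l`. Since `σ` satisfies `l`, no term of `Φ`
contains the complement of `l` either, so the flipped assignment still satisfies `Φ` but falsifies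
`l`. This gives the terms `t i` from `Φ`, and any pair of them is consistent as a subset of `Φ`.
Conversely, a pairwise consistent set of terms is consistent, because an inconsistency among
terms is always a clash `x ∈ s`, `¬x ∈ t` between two of them; so the range of `t` works as `Φ`.
-/

namespace Lit

variable {V : Type}

def var : Lit V → V := Sum.elim id id

lemma eq_or_eq_complLit_of_var_eq {m l : Lit V} (h : m.var = l.var) :
    m = l ∨ m = complLit l := by
  rcases m with x | x <;> rcases l with y | y <;> simp_all [var, complLit]

end Lit

section Satisfaction

variable {V : Type}

lemma satLit_complLit (σ : V → Bool) (m : Lit V) : satLit σ (complLit m) ↔ ¬ satLit σ m := by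
  cases m <;> simp [satLit, complLit]

lemma satLit_update_of_var_ne [DecidableEq V] (σ : V → Bool) (b : Bool) {m : Lit V} {v : V}
    (h : m.var ≠ v) : satLit (Function.update σ v b) m ↔ satLit σ m := by
  rcases m with x | x <;> simp_all [satLit, Lit.var, Function.update_of_ne]

lemma satLit_update_var_not [DecidableEq V] (σ : V → Bool) (l : Lit V) :
    satLit (Function.update σ l.var (!σ l.var)) l ↔ ¬ satLit σ l := by
  cases l <;> simp [satLit, Lit.var]

lemma complLit_not_mem_of_satTerm {σ : V → Bool} {t : Term V} {l : Lit V}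
    (ht : satTerm σ t) (hl : satLit σ l) : complLit l ∉ t :=
  fun hmem => (satLit_complLit σ l).1 (ht _ hmem) hl

lemma ConsistentT.mono {Φ Ψ : Set (Term V)} (h : Φ ⊆ Ψ) (hΨ : ConsistentT Ψ) :
    ConsistentT Φ :=
  let ⟨σ, hσ⟩ := hΨ
  ⟨σ, fun t ht => hσ t (h ht)⟩

lemma entailsLit_of_mem {Φ : Set (Term V)} {t : Term V} {l : Lit V} (ht : t ∈ Φ)
    (hl : l ∈ t) : EntailsLit Φ l :=
  fun _ hσ => hσ t ht l hl

lemma consistentT_of_pairwise {Φ : Set (Term V)}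
    (h : ∀ s ∈ Φ, ∀ t ∈ Φ, ConsistentT {s, t}) : ConsistentT Φ := by
  classical
  refine ⟨fun x => decide (∃ t ∈ Φ, Sum.inl x ∈ t), fun s hs m hm => ?_⟩
  rcases m with x | x
  · simpa [satLit] using ⟨s, hs, hm⟩
  · simp only [satLit, decide_eq_false_iff_not, not_exists, not_and]
    intro t ht hxt
    obtain ⟨τ, hτ⟩ := h s hs t ht
    have hneg : τ x = false := hτ s (by simp) _ hm
    have hpos : τ x = true := hτ t (by simp) _ hxt
    simp_all

lemma exists_mem_of_entailsLit {Φ : Set (Term V)} {σ : V → Bool} {l : Lit V}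
    (hσ : ∀ t ∈ Φ, satTerm σ t) (hl : EntailsLit Φ l) : ∃ t ∈ Φ, l ∈ t := by
  classical
  by_contra! hnot
  have hσl : satLit σ l := hl σ hσ
  have hflip : ∀ t ∈ Φ, satTerm (Function.update σ l.var (!σ l.var)) t := by
    intro t ht m hm
    by_cases hvar : m.var = l.var
    · rcases Lit.eq_or_eq_complLit_of_var_eq hvar with rfl | rfl
      · exact absurd hm (hnot t ht)
      · exact absurd hm (complLit_not_mem_of_satTerm (hσ t ht) hσl)
    · exact (satLit_update_of_var_ne σ _ hvar).2 (hσ t ht m hm)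
  exact (satLit_update_var_not σ l).1 (hl _ hflip) hσl

end Satisfaction

/-- There is a consistent subset of `Δ` entailing each literal `l i` iff one can
choose, for each `i`, a term `t i ∈ Δ` containing `l i` and containing the
complement of no `l j`, such that all pairs `{t i, t j}` are consistent. -/
theorem stmt_7 {V : Type} (Δ : Set (Term V)) (k : ℕ) (l : Fin k → Lit V) :
    (∃ Φ : Set (Term V), Φ ⊆ Δ ∧ ConsistentT Φ ∧ ∀ i, EntailsLit Φ (l i)) ↔
    (∃ t : Fin k → Term V,
      (∀ i, t i ∈ Δ ∧ l i ∈ t i ∧ ∀ j, complLit (l j) ∉ t i) ∧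
      ∀ i j, ConsistentT {t i, t j}) := by
  constructor
  · rintro ⟨Φ, hΦΔ, ⟨σ, hσ⟩, hent⟩
    choose t htΦ hlt using fun i => exists_mem_of_entailsLit hσ (hent i)
    refine ⟨t, fun i => ⟨hΦΔ (htΦ i), hlt i, fun j => ?_⟩, fun i j => ?_⟩
    · exact complLit_not_mem_of_satTerm (hσ _ (htΦ i)) (hent j σ hσ)
    · exact ConsistentT.mono (Set.insert_subset_iff.2 ⟨htΦ i, by simpa using htΦ j⟩) ⟨σ, hσ⟩
  · rintro ⟨t, ht, hcons⟩
    refine ⟨Set.range t, Set.range_subset_iff.2 fun i => (ht i).1, ?_,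
      fun i => entailsLit_of_mem (Set.mem_range_self i) (ht i).2.1⟩
    refine consistentT_of_pairwise ?_
    rintro _ ⟨i, rfl⟩ _ ⟨j, rfl⟩
    exact hcons i j
end

section
/- Let r ≥ 1, let Δ be a finite set of r-formulas over V, and let a_1, …, a_k be atoms (each a literal or a positive clause of width at most r). Then there exists a consistent subset Φ ⊆ Δ with Φ ⊨ a_i for every i = 1, …, k if and only if there exist subsets S_1, …, S_k ⊆ Δ such that |S_i| ≤ r and S_i ⊨ a_i for every i, and the union S_1 ∪ … ∪ S_k is consistent. -/
/-- An `r`-formula: a finite set of literals together with a finite set of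
positive clauses (each clause a finite set of variables). -/
abbrev RForm (V : Type) := Finset (Lit V) × Finset (Finset V)

/-- An atom: a literal or a positive clause. -/
abbrev Atom (V : Type) := Lit V ⊕ Finset V

/-- An assignment satisfies a positive clause if it makes some variable of it true. -/
def satClause {V : Type} (σ : V → Bool) (C : Finset V) : Prop := ∃ x ∈ C, σ x = true

/-- An assignment satisfies an `r`-formula if it satisfies all of its literals
and all of its positive clauses. -/
def satForm {V : Type} (σ : V → Bool) (φ : RForm V) : Prop :=
  (∀ l ∈ φ.1, satLit σ l) ∧ (∀ C ∈ φ.2, satClause σ C)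

/-- All positive clauses of the formula are nonempty and of width at most `r`. -/
def IsRForm {V : Type} (r : ℕ) (φ : RForm V) : Prop :=
  ∀ C ∈ φ.2, C.Nonempty ∧ C.card ≤ r

/-- An assignment satisfies an atom. -/
def satAtom {V : Type} (σ : V → Bool) : Atom V → Prop
  | Sum.inl l => satLit σ l
  | Sum.inr C => satClause σ C

/-- The atom is a literal, or a nonempty positive clause of width at most `r`. -/
def IsRAtom {V : Type} (r : ℕ) : Atom V → Prop
  | Sum.inl _ => True
  | Sum.inr C => C.Nonempty ∧ C.card ≤ r

/-- A set of `r`-formulas is consistent if some assignment satisfies all members. -/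
def ConsistentF {V : Type} (Φ : Set (RForm V)) : Prop := ∃ σ, ∀ φ ∈ Φ, satForm σ φ

/-- `Φ ⊨ a`: every assignment satisfying all members of `Φ` satisfies the atom `a`. -/
def EntailsA {V : Type} (Φ : Set (RForm V)) (a : Atom V) : Prop :=
  ∀ σ, (∀ φ ∈ Φ, satForm σ φ) → satAtom σ a

/-!
Let `N` be the set of variables that occur negated in a consistent set `Φ`. As all clauses are
positive, raising a model of `Φ` to `true` outside `N` gives another model, so `Φ ⊨ ¬x` forces
`¬x` to be a literal of a single member of `Φ`. If `Φ ⊨ A` for a positive clause `A`, the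
assignment that is `false` exactly on `N ∪ A` violates some `φ ∈ Φ`, through a positive literal
or clause `D ⊆ N ∪ A`. A model of `Φ` makes a variable of `D` true, which therefore lies outside
`N`; so `φ` together with one formula containing `¬v` for each of the at most `|D| - 1 ≤ r - 1`
variables `v ∈ D ∩ N` entails `A`. Conversely, the union of the `S i` is a consistent subset of
`Δ` entailing every `a i`.
-/

theorem Finset.exists_subset_card_le_of_forall_exists {α β : Type*} {F : Finset α} {s : Set β}
    {R : α → β → Prop} (h : ∀ a ∈ F, ∃ b ∈ s, R a b) :
    ∃ T : Finset β, ↑T ⊆ s ∧ T.card ≤ F.card ∧ ∀ a ∈ F, ∃ b ∈ T, R a b := by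
  classical
  choose g hgs hgR using h
  refine ⟨F.attach.image fun a : F => g a.1 a.2, ?_, ?_, fun a ha => ⟨g a ha, ?_, hgR a ha⟩⟩
  · simp only [Finset.coe_image, Set.image_subset_iff]
    exact fun a _ => hgs a a.2
  · exact Finset.card_image_le.trans F.card_attach.le
  · exact Finset.mem_image.2 ⟨⟨a, ha⟩, F.mem_attach _, rfl⟩

section

variable {V : Type}

def negVars (Φ : Set (RForm V)) : Set V := {v | ∃ φ ∈ Φ, Sum.inr v ∈ φ.1}

def IsPosClause (φ : RForm V) (D : Finset V) : Prop :=
  D ∈ φ.2 ∨ ∃ v, Sum.inl v ∈ φ.1 ∧ D = {v}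

theorem satClause_singleton {σ : V → Bool} {v : V} : satClause σ {v} ↔ σ v = true := by
  simp [satClause]

theorem satForm_iff {σ : V → Bool} {φ : RForm V} :
    satForm σ φ ↔
      (∀ v, Sum.inr v ∈ φ.1 → σ v = false) ∧ ∀ D, IsPosClause φ D → satClause σ D := by
  constructor
  · rintro ⟨hlit, hclause⟩
    refine ⟨fun v hv => hlit _ hv, ?_⟩
    rintro D (hD | ⟨v, hv, rfl⟩)
    · exact hclause D hD
    · exact satClause_singleton.2 (hlit _ hv)
  · rintro ⟨hneg, hpos⟩
    refine ⟨?_, fun C hC => hpos C (Or.inl hC)⟩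
    rintro (v | v) hv
    · exact satClause_singleton.1 (hpos _ (Or.inr ⟨v, hv, rfl⟩))
    · exact hneg v hv

theorem IsPosClause.card_le {r : ℕ} (hr : 1 ≤ r) {φ : RForm V} (hφ : IsRForm r φ)
    {D : Finset V} (hD : IsPosClause φ D) : D.card ≤ r := by
  rcases hD with hD | ⟨v, -, rfl⟩
  · exact (hφ D hD).2
  · simpa using hr

theorem satForm_of_le {σ τ : V → Bool} {φ : RForm V} (h : satForm σ φ) (hle : σ ≤ τ)
    (hneg : ∀ v, Sum.inr v ∈ φ.1 → τ v = false) : satForm τ φ := by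
  rw [satForm_iff] at h ⊢
  refine ⟨hneg, fun D hD => ?_⟩
  obtain ⟨u, hu, hσu⟩ := h.2 D hD
  exact ⟨u, hu, top_le_iff.1 (hσu.symm.trans_le (hle u))⟩

theorem eq_false_of_mem_negVars {Φ : Set (RForm V)} {σ : V → Bool}
    (hσ : ∀ φ ∈ Φ, satForm σ φ) {v : V} (hv : v ∈ negVars Φ) : σ v = false := by
  obtain ⟨φ, hφ, hvφ⟩ := hv
  exact (hσ φ hφ).1 _ hvφ

theorem ConsistentF.exists_model_eq_false_imp_mem_negVars {Φ : Set (RForm V)}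
    (h : ConsistentF Φ) :
    ∃ τ : V → Bool, (∀ φ ∈ Φ, satForm τ φ) ∧ ∀ v, τ v = false → v ∈ negVars Φ := by
  classical
  obtain ⟨σ, hσ⟩ := h
  refine ⟨fun v => decide (v ∉ negVars Φ), fun φ hφ => satForm_of_le (hσ φ hφ) ?_ ?_, ?_⟩
  · intro v
    by_cases hv : v ∈ negVars Φ
    · simp [eq_false_of_mem_negVars hσ hv]
    · simp [hv]
  · intro v hv
    simpa using ⟨φ, hφ, hv⟩
  · intro v hv
    simpa using hv

theorem ConsistentF.mono {Φ Ψ : Set (RForm V)} (hΦΨ : Φ ⊆ Ψ) (h : ConsistentF Ψ) :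
    ConsistentF Φ :=
  let ⟨σ, hσ⟩ := h
  ⟨σ, fun φ hφ => hσ φ (hΦΨ hφ)⟩

theorem EntailsA.mono {Φ Ψ : Set (RForm V)} {b : Atom V} (hΦΨ : Φ ⊆ Ψ) (h : EntailsA Φ b) :
    EntailsA Ψ b :=
  fun σ hσ => h σ fun φ hφ => hσ φ (hΦΨ hφ)

theorem entailsA_pos_iff_entailsA_singleton {Φ : Set (RForm V)} {x : V} :
    EntailsA Φ (Sum.inl (Sum.inl x)) ↔ EntailsA Φ (Sum.inr {x}) := by
  simp only [EntailsA, satAtom, satLit, satClause_singleton]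

theorem ConsistentF.exists_mem_of_entailsA_neg {Φ : Set (RForm V)} (hcons : ConsistentF Φ)
    {x : V} (hent : EntailsA Φ (Sum.inl (Sum.inr x))) : ∃ φ ∈ Φ, Sum.inr x ∈ φ.1 := by
  obtain ⟨τ, hτ, hτneg⟩ := hcons.exists_model_eq_false_imp_mem_negVars
  exact hτneg x (hent τ hτ)

theorem exists_isPosClause_subset_of_entailsA {Φ : Set (RForm V)} {A : Finset V}
    (hent : EntailsA Φ (Sum.inr A)) :
    ∃ φ ∈ Φ, ∃ D, IsPosClause φ D ∧ ∀ u ∈ D, u ∈ negVars Φ ∨ u ∈ A := by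
  classical
  by_contra! h
  set τ : V → Bool := fun v => decide (v ∉ negVars Φ ∧ v ∉ A)
  have hτ : ∀ φ ∈ Φ, satForm τ φ := by
    refine fun φ hφ => satForm_iff.2 ⟨fun v hv => ?_, fun D hD => ?_⟩
    · simpa [τ] using fun h => (h ⟨φ, hφ, hv⟩).elim
    · obtain ⟨u, hu, hN, hA⟩ := h φ hφ D hD
      exact ⟨u, hu, by simp [τ, hN, hA]⟩
  obtain ⟨u, hu, hτu⟩ := hent τ hτ
  simp [τ, hu] at hτu

theorem exists_finset_entailsA_clause {r : ℕ} (hr : 1 ≤ r) {Φ : Set (RForm V)}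
    (hΦ : ∀ φ ∈ Φ, IsRForm r φ) (hcons : ConsistentF Φ) {A : Finset V}
    (hent : EntailsA Φ (Sum.inr A)) :
    ∃ S : Finset (RForm V), ↑S ⊆ Φ ∧ S.card ≤ r ∧ EntailsA ↑S (Sum.inr A) := by
  classical
  obtain ⟨σ, hσ⟩ := hcons
  obtain ⟨φ, hφ, D, hD, hDA⟩ := exists_isPosClause_subset_of_entailsA hent
  set F := D.filter (· ∈ negVars Φ)
  obtain ⟨T, hTΦ, hTF, hT⟩ := F.exists_subset_card_le_of_forall_exists
    (s := Φ) (R := fun v ψ => Sum.inr v ∈ ψ.1) fun v hv => (Finset.mem_filter.1 hv).2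
  have hFD : F.card < D.card := by
    obtain ⟨w, hwD, hσw⟩ := (satForm_iff.1 (hσ φ hφ)).2 D hD
    refine Finset.card_lt_card (Finset.filter_ssubset.2 ⟨w, hwD, fun hw => ?_⟩)
    simp [eq_false_of_mem_negVars hσ hw] at hσw
  refine ⟨insert φ T, ?_, ?_, fun τ hτ => ?_⟩
  · simpa [Set.insert_subset_iff] using ⟨hφ, hTΦ⟩
  · calc (insert φ T).card ≤ T.card + 1 := Finset.card_insert_le _ _
      _ ≤ D.card := by omega
      _ ≤ r := hD.card_le hr (hΦ φ hφ)
  · obtain ⟨u, huD, hτu⟩ := (satForm_iff.1 (hτ φ (by simp))).2 D hD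
    refine ⟨u, (hDA u huD).resolve_left fun huN => ?_, hτu⟩
    obtain ⟨ψ, hψT, huψ⟩ := hT u (Finset.mem_filter.2 ⟨huD, huN⟩)
    have hτu' : τ u = false := (hτ ψ (by simp [hψT])).1 _ huψ
    simp [hτu'] at hτu

theorem exists_finset_entailsA {r : ℕ} (hr : 1 ≤ r) {Φ : Set (RForm V)}
    (hΦ : ∀ φ ∈ Φ, IsRForm r φ) (hcons : ConsistentF Φ) {b : Atom V} (hent : EntailsA Φ b) :
    ∃ S : Finset (RForm V), ↑S ⊆ Φ ∧ S.card ≤ r ∧ EntailsA ↑S b := by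
  rcases b with (x | x) | A
  · simp only [entailsA_pos_iff_entailsA_singleton] at hent ⊢
    exact exists_finset_entailsA_clause hr hΦ hcons hent
  · obtain ⟨φ, hφ, hxφ⟩ := hcons.exists_mem_of_entailsA_neg hent
    exact ⟨{φ}, by simpa using hφ, by simpa using hr,
      fun σ hσ => (hσ φ (by simp)).1 _ hxφ⟩
  · exact exists_finset_entailsA_clause hr hΦ hcons hent

end

theorem stmt_11_general {V : Type} (r : ℕ) (hr : 1 ≤ r) (Δ : Finset (RForm V))
    (hΔ : ∀ φ ∈ Δ, IsRForm r φ) (k : ℕ) (a : Fin k → Atom V) :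
    (∃ Φ : Finset (RForm V), Φ ⊆ Δ ∧ ConsistentF (↑Φ : Set (RForm V)) ∧
      ∀ i, EntailsA (↑Φ : Set (RForm V)) (a i)) ↔
    (∃ S : Fin k → Finset (RForm V),
      (∀ i, S i ⊆ Δ ∧ (S i).card ≤ r ∧ EntailsA (↑(S i) : Set (RForm V)) (a i)) ∧
      ConsistentF (⋃ i, (↑(S i) : Set (RForm V)))) := by
  classical
  constructor
  · rintro ⟨Φ, hΦΔ, hcons, hent⟩
    choose S hSΦ hScard hSent using fun i =>
      exists_finset_entailsA hr (fun φ hφ => hΔ φ (hΦΔ hφ)) hcons (hent i)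
    exact ⟨S, fun i => ⟨(Finset.coe_subset.1 (hSΦ i)).trans hΦΔ, hScard i, hSent i⟩,
      hcons.mono (Set.iUnion_subset hSΦ)⟩
  · rintro ⟨S, hS, hcons⟩
    refine ⟨Finset.univ.biUnion S, Finset.biUnion_subset.2 fun i _ => (hS i).1, ?_,
      fun i => (hS i).2.2.mono ?_⟩
    · simpa using hcons
    · exact Finset.coe_subset.2 (Finset.subset_biUnion_of_mem S (Finset.mem_univ i))

/-- There is a consistent subset of `Δ` entailing every atom `a i` iff there
are subsets `S i ⊆ Δ` with `|S i| ≤ r` and `S i ⊨ a i` for every `i`, whose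
union is consistent. -/
theorem stmt_11 {V : Type} (r : ℕ) (hr : 1 ≤ r) (Δ : Finset (RForm V))
    (hΔ : ∀ φ ∈ Δ, IsRForm r φ) (k : ℕ) (a : Fin k → Atom V)
    (ha : ∀ i, IsRAtom r (a i)) :
    (∃ Φ : Finset (RForm V), Φ ⊆ Δ ∧ ConsistentF (↑Φ : Set (RForm V)) ∧
      ∀ i, EntailsA (↑Φ : Set (RForm V)) (a i)) ↔
    (∃ S : Fin k → Finset (RForm V),
      (∀ i, S i ⊆ Δ ∧ (S i).card ≤ r ∧ EntailsA (↑(S i) : Set (RForm V)) (a i)) ∧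
      ConsistentF (⋃ i, (↑(S i) : Set (RForm V)))) :=
  stmt_11_general r hr Δ hΔ k a
end
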